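/- arXiv:0802.4294 — 3 statements merged into one kernel-verified Lean document; each statement's English description precedes it below -/
import Mathlib

section
/- Let G = ⟨a,b⟩ be the free group of rank 2, let K₂ = ℤ/2ℤ with uniform measure κ₂, and K₄ = ℤ/2ℤ × ℤ/2ℤ with uniform measure κ₄. The map φ : K₂^G → K₄^G defined by φ(x)(g) = (x(g)+x(ga), x(g)+x(gb)) is G-equivariant and pushes the product measure κ₂^G forward to κ₄^G. Hence the Bernoulli shift of entropy log 2 factors onto the Bernoulli shift of entropy log 4. -/
open MeasureTheory
open scoped ENNReal

namespace Bowen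

/-- The Bernoulli shift action: `(g • x)(f) = x(g⁻¹ f)`. -/
def shift {G : Type*} [Group G] {K : Type*} (g : G) (x : G → K) : G → K :=
  fun f => x (g⁻¹ * f)

noncomputable instance : MeasurableSpace (ZMod 2) := ⊤

/-- The Ornstein–Weiss map `φ(x)(g) = (x(g) + x(ga), x(g) + x(gb))` over the rank 2 free
group `G = ⟨a,b⟩`, with `a, b` the two free generators. -/
def owMap (x : FreeGroup (Fin 2) → ZMod 2) : FreeGroup (Fin 2) → ZMod 2 × ZMod 2 :=
  fun g => (x g + x (g * FreeGroup.of 0), x g + x (g * FreeGroup.of 1))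

end Bowen

open Bowen

/-!
The preimage under `owMap` of the cylinder `{z | ∀ g ∈ F, z g = y g}` is cut out by the `2 |F|`
equations `x g + x (g a) = (y g).1`, `x g + x (g b) = (y g).2` over `ℤ/2`, one for each edge
`{g, ga}`, `{g, gb}` of the Cayley tree. If `g₀ ∈ F` has maximal word length, at most one of
`g₀, g₀a, g₀b` is touched by the equations of `F \ {g₀}`, so the two new equations can be imposed
one after the other, each on a coordinate not seen before. Flipping that coordinate preserves
`κ₂^G` and exchanges the equation with its negation, so each equation halves the measure, and the
preimage has measure `4^(-|F|)`, which is the `κ₄^G`-measure of the cylinder.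
-/

open scoped Pointwise

namespace FreeGroup

variable {α : Type*} [DecidableEq α]

theorem toWord_mul_of_eq_or (g : FreeGroup α) (i : α) :
    (g * of i).toWord = g.toWord ++ [(i, true)] ∨
      g.toWord = (g * of i).toWord ++ [(i, false)] := by
  by_cases hlast : g.toWord.getLast? = some (i, false)
  · obtain ⟨w, hw⟩ := List.getLast?_eq_some_iff.mp hlast
    have hg : g = mk w * (of i)⁻¹ := by
      rw [← mk_toWord (x := g), hw, of, inv_mk, mul_mk]
      rfl
    have hw_red : IsReduced w := isReduced_toWord.infix (hw ▸ (List.prefix_append _ _).isInfix)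
    have hmul : g * of i = mk w := by rw [hg, inv_mul_cancel_right]
    right
    rw [hmul, toWord_mk, hw_red.reduce_eq, hw]
  · left
    rw [toWord_mul, toWord_of]
    refine IsReduced.reduce_eq (List.isChain_append.mpr ⟨isReduced_toWord, IsReduced.singleton, ?_⟩)
    rintro ⟨j, b⟩ hlast' y hy rfl
    obtain rfl : y = (i, true) := by simpa using hy.symm
    cases b
    · exact absurd hlast' hlast
    · rfl

theorem toWord_eq_append_or_norm_eq_of_eq_mul_of {v g : FreeGroup α} {j : α} (h : v = g * of j) :
    v.toWord = g.toWord ++ [(j, true)] ∨ norm g = norm v + 1 := by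
  subst h
  refine (toWord_mul_of_eq_or g j).imp id fun h => ?_
  simp [norm, h]

theorem mul_of_notMem_mul_of_norm_le {g₀ : FreeGroup α} {i : α}
    (hext : (g₀ * of i).toWord = g₀.toWord ++ [(i, true)]) {S : Set (FreeGroup α)}
    (hS : ∀ g ∈ S, g ≠ g₀ ∧ norm g ≤ norm g₀) :
    g₀ * of i ∉ S * insert 1 (Set.range (of : α → FreeGroup α)) := by
  intro hmem
  obtain ⟨g, hg, t, ht, heq⟩ := Set.mem_mul.mp hmem
  obtain ⟨hne, hle⟩ := hS g hg
  have hnorm : norm (g₀ * of i) = norm g₀ + 1 := by simp [norm, hext]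
  rcases ht with rfl | ⟨j, rfl⟩
  · rw [mul_one] at heq
    rw [← heq] at hnorm
    omega
  · rcases toWord_eq_append_or_norm_eq_of_eq_mul_of heq.symm with h | h
    · exact hne (toWord_injective (List.append_inj' (hext.symm.trans h) rfl).1).symm
    · omega

theorem notMem_mul_of_norm_le {g₀ : FreeGroup α} {w : List (α × Bool)} {i : α}
    (hlast : g₀.toWord = w ++ [(i, false)]) {S : Set (FreeGroup α)}
    (hS : ∀ g ∈ S, g ≠ g₀ ∧ norm g ≤ norm g₀) :
    g₀ ∉ S * insert 1 (Set.range (of : α → FreeGroup α)) := by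
  intro hmem
  obtain ⟨g, hg, t, ht, heq⟩ := Set.mem_mul.mp hmem
  obtain ⟨hne, hle⟩ := hS g hg
  rcases ht with rfl | ⟨j, rfl⟩
  · exact hne (by simpa using heq)
  · rcases toWord_eq_append_or_norm_eq_of_eq_mul_of heq.symm with h | h
    · simpa using (List.append_inj' (hlast.symm.trans h) rfl).2
    · omega

end FreeGroup

theorem DependsOn.mem_inter {ι : Type*} {α : ι → Type*} {A B : Set (∀ i, α i)} {s t : Set ι}
    (hA : DependsOn (· ∈ A) s) (hB : DependsOn (· ∈ B) t) : DependsOn (· ∈ A ∩ B) (s ∪ t) :=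
  fun _ _ h => congr_arg₂ And (hA fun i hi => h i (.inl hi)) (hB fun i hi => h i (.inr hi))

theorem dependsOn_mem_setOf_add_eq {G K : Type*} [Add K] (u v : G) (c : K) :
    DependsOn (· ∈ {x : G → K | x u + x v = c}) {u, v} := by
  intro x y h
  simp only [Set.mem_ofPred_eq, h u (by simp), h v (by simp)]

namespace MeasureTheory

section PointCylinder

variable {G K : Type*}

def pointCylinder (F : Finset G) (y : G → K) : Set (G → K) := {x | ∀ g ∈ F, x g = y g}

theorem pointCylinder_eq_of_mem {F : Finset G} {x y : G → K} (hx : x ∈ pointCylinder F y) :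
    pointCylinder F y = pointCylinder F x := by
  ext z
  exact forall₂_congr fun g hg => by rw [hx g hg]

theorem isPiSystem_pointCylinder :
    IsPiSystem {S : Set (G → K) | ∃ F y, S = pointCylinder F y} := by
  classical
  rintro _ ⟨F, y, rfl⟩ _ ⟨F', y', rfl⟩ ⟨x, hx, hx'⟩
  refine ⟨F ∪ F', x, ?_⟩
  rw [pointCylinder_eq_of_mem hx, pointCylinder_eq_of_mem hx']
  ext z
  simp only [pointCylinder, Set.mem_inter_iff, Set.mem_ofPred_eq, Finset.mem_union, or_imp,
    forall_and]

variable [MeasurableSpace K]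

theorem measurableSet_pointCylinder [MeasurableSingletonClass K] (F : Finset G) (y : G → K) :
    MeasurableSet (pointCylinder F y) :=
  MeasurableSet.pi F.countable_toSet fun g _ => measurableSet_singleton (y g)

theorem generateFrom_pointCylinder [Countable K] [MeasurableSingletonClass K] :
    MeasurableSpace.generateFrom {S : Set (G → K) | ∃ F y, S = pointCylinder F y} =
      MeasurableSpace.pi := by
  refine le_antisymm (MeasurableSpace.generateFrom_le ?_) ?_
  · rintro _ ⟨F, y, rfl⟩
    exact measurableSet_pointCylinder F y
  · refine iSup_le fun g => measurable_iff_comap_le.mp ?_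
    refine @measurable_to_countable' _ _ _ _ (_) _ fun k =>
      MeasurableSpace.measurableSet_generateFrom ⟨{g}, fun _ => k, ?_⟩
    ext x
    simp [pointCylinder]

theorem Measure.ext_of_pointCylinder [Countable K] [MeasurableSingletonClass K] [Nonempty K]
    {μ ν : Measure (G → K)} [IsFiniteMeasure μ]
    (h : ∀ F y, μ (pointCylinder F y) = ν (pointCylinder F y)) : μ = ν := by
  refine ext_of_generate_finite _ generateFrom_pointCylinder.symm isPiSystem_pointCylinder
    (by rintro _ ⟨F, y, rfl⟩; exact h F y) ?_
  simpa [pointCylinder] using h ∅ (fun _ => Classical.arbitrary K)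

theorem measurePreserving_add_right_of_pointCylinder [AddGroup K] [Countable K]
    [DiscreteMeasurableSpace K] {μ : Measure (G → K)} [IsFiniteMeasure μ]
    (hμ : ∀ F y y', μ (pointCylinder F y) = μ (pointCylinder F y')) (z : G → K) :
    MeasurePreserving (· + z) μ μ := by
  refine ⟨measurable_add_const z, Measure.ext_of_pointCylinder fun F y => ?_⟩
  rw [Measure.map_apply (measurable_add_const z) (measurableSet_pointCylinder F y)]
  have hpre : (· + z) ⁻¹' pointCylinder F y = pointCylinder F (y - z) := by
    ext x
    simp [pointCylinder, eq_sub_iff_add_eq]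
  rw [hpre, hμ]

end PointCylinder

theorem measure_inter_eq_half_of_measurePreserving {α : Type*} [MeasurableSpace α]
    {μ : Measure α} {σ : α → α} (hσ : MeasurePreserving σ μ μ) {A B : Set α}
    (hA : MeasurableSet A) (hB : MeasurableSet B) (hσA : σ ⁻¹' A = A) (hσB : σ ⁻¹' B = Bᶜ) :
    μ (A ∩ B) = μ A / 2 := by
  have hsymm : μ (A \ B) = μ (A ∩ B) := by
    rw [← hσ.measure_preimage (hA.inter hB).nullMeasurableSet, Set.preimage_inter, hσA, hσB,
      Set.sdiff_eq]
  rw [ENNReal.eq_div_iff two_ne_zero ENNReal.ofNat_ne_top, two_mul,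
    ← measure_inter_add_sdiff A hB, hsymm]

section Halving

variable {G : Type*} {μ : Measure (G → ZMod 2)}

theorem measurableSet_setOf_add_eq (u v : G) (c : ZMod 2) :
    MeasurableSet {x : G → ZMod 2 | x u + x v = c} :=
  measurableSet_eq_fun (by fun_prop) measurable_const

variable [DecidableEq G]

theorem measure_inter_setOf_add_eq_half {v : G}
    (hμ : MeasurePreserving (· + Pi.single v 1) μ μ) {A : Set (G → ZMod 2)}
    (hA : MeasurableSet A) {s : Set G} (hAs : DependsOn (· ∈ A) s) (hv : v ∉ s) {u : G}
    (huv : u ≠ v) (c : ZMod 2) : μ (A ∩ {x | x u + x v = c}) = μ A / 2 := by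
  refine measure_inter_eq_half_of_measurePreserving hμ hA
    (measurableSet_setOf_add_eq u v c) ?_ ?_
  · ext x
    exact (hAs fun i hi => by simp [Pi.single_eq_of_ne (ne_of_mem_of_not_mem hi hv)]).to_iff
  · ext x
    have flip : ∀ a b : ZMod 2, a + (b + 1) = c ↔ ¬a + b = c := by decide +revert
    simpa [Pi.single_eq_of_ne huv] using flip (x u) (x v)

theorem measure_inter_inter_eq_inv_four_mul (hμ : ∀ z, MeasurePreserving (· + z) μ μ)
    {P : Set (G → ZMod 2)} (hP : MeasurableSet P) {s : Set G} (hPs : DependsOn (· ∈ P) s)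
    {w w₁ w₂ : G} (h₁ : w ≠ w₁) (h₂ : w ≠ w₂) (h₁₂ : w₁ ≠ w₂) (hw₂ : w₂ ∉ s)
    (hw₁ : w ∉ s ∨ w₁ ∉ s) (c₁ c₂ : ZMod 2) :
    μ (P ∩ {x | x w + x w₁ = c₁} ∩ {x | x w + x w₂ = c₂}) = 4⁻¹ * μ P := by
  have half₁ : μ (P ∩ {x | x w + x w₁ = c₁}) = μ P / 2 := by
    rcases hw₁ with hw | hw₁
    · rw [show {x : G → ZMod 2 | x w + x w₁ = c₁} = {x | x w₁ + x w = c₁} by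
        simp only [add_comm]]
      exact measure_inter_setOf_add_eq_half (hμ _) hP hPs hw h₁.symm c₁
    · exact measure_inter_setOf_add_eq_half (hμ _) hP hPs hw₁ h₁ c₁
  have half₂ := measure_inter_setOf_add_eq_half (hμ _)
    (hP.inter (measurableSet_setOf_add_eq w w₁ c₁))
    (hPs.mem_inter (dependsOn_mem_setOf_add_eq w w₁ c₁))
    (by simp [hw₂, h₂.symm, h₁₂.symm]) h₂ c₂
  rw [half₂, half₁, ENNReal.div_eq_inv_mul, ENNReal.div_eq_inv_mul, ← mul_assoc,
    ← ENNReal.mul_inv (by simp) (by simp)]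
  norm_num

end Halving

end MeasureTheory

namespace Bowen

open FreeGroup

theorem measurable_owMap : Measurable owMap :=
  measurable_pi_lambda _ fun _ => by unfold owMap; fun_prop

theorem owMap_shift (g : FreeGroup (Fin 2)) (x : FreeGroup (Fin 2) → ZMod 2) :
    owMap (shift g x) = shift g (owMap x) := by
  funext f
  simp [owMap, shift, mul_assoc]

theorem owMap_preimage_pointCylinder_insert (g : FreeGroup (Fin 2)) (F : Finset (FreeGroup (Fin 2)))
    (y : FreeGroup (Fin 2) → ZMod 2 × ZMod 2) :
    owMap ⁻¹' pointCylinder (insert g F) y = owMap ⁻¹' pointCylinder F y ∩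
      {x | x g + x (g * of 0) = (y g).1} ∩ {x | x g + x (g * of 1) = (y g).2} := by
  ext x
  simp only [pointCylinder, Set.mem_preimage, Set.mem_inter_iff, Set.mem_ofPred_eq,
    Finset.forall_mem_insert, owMap, Prod.ext_iff]
  tauto

theorem dependsOn_mem_owMap_preimage (F : Finset (FreeGroup (Fin 2)))
    (y : FreeGroup (Fin 2) → ZMod 2 × ZMod 2) :
    DependsOn (· ∈ owMap ⁻¹' pointCylinder F y)
      ((F : Set (FreeGroup (Fin 2))) * insert 1 (Set.range of)) := by
  intro x x' h
  have hF : ∀ g ∈ F, ∀ t ∈ insert 1 (Set.range of), x (g * t) = x' (g * t) :=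
    fun g hg t ht => h _ (Set.mul_mem_mul hg ht)
  refine propext (forall₂_congr fun g hg => ?_)
  have hg1 : x g = x' g := by
    have := hF g hg 1 (Set.mem_insert _ _)
    rwa [mul_one] at this
  simp only [owMap, hg1, hF g hg (of 0) (by simp), hF g hg (of 1) (by simp)]

theorem measure_owMap_preimage_pointCylinder {μ : Measure (FreeGroup (Fin 2) → ZMod 2)}
    [IsProbabilityMeasure μ] (hμ : ∀ z, MeasurePreserving (· + z) μ μ)
    (F : Finset (FreeGroup (Fin 2))) (y : FreeGroup (Fin 2) → ZMod 2 × ZMod 2) :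
    μ (owMap ⁻¹' pointCylinder F y) = 4⁻¹ ^ F.card := by
  induction F using Finset.induction_on_max_value (fun g : FreeGroup (Fin 2) => g.norm) with
  | empty => simp [pointCylinder]
  | insert g₀ F hg₀ hmax ih =>
    have hS : ∀ g ∈ (F : Set (FreeGroup (Fin 2))), g ≠ g₀ ∧ g.norm ≤ g₀.norm :=
      fun g hg => ⟨fun h => hg₀ (h ▸ hg), hmax g hg⟩
    have hP := measurable_owMap (measurableSet_pointCylinder F y)
    have hPs := dependsOn_mem_owMap_preimage F y
    rw [owMap_preimage_pointCylinder_insert, Finset.card_insert_of_notMem hg₀, pow_succ', ← ih]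
    have h0 : g₀ ≠ g₀ * of 0 := by simp
    have h1 : g₀ ≠ g₀ * of 1 := by simp
    have h01 : g₀ * of 0 ≠ g₀ * of 1 := by simpa using of_injective.ne (by decide : (0 : Fin 2) ≠ 1)
    rcases toWord_mul_of_eq_or g₀ 0 with hext₀ | hlast₀ <;>
      rcases toWord_mul_of_eq_or g₀ 1 with hext₁ | hlast₁
    · exact measure_inter_inter_eq_inv_four_mul hμ hP hPs h0 h1 h01
        (mul_of_notMem_mul_of_norm_le hext₁ hS) (.inr (mul_of_notMem_mul_of_norm_le hext₀ hS)) _ _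
    · rw [Set.inter_right_comm]
      exact measure_inter_inter_eq_inv_four_mul hμ hP hPs h1 h0 h01.symm
        (mul_of_notMem_mul_of_norm_le hext₀ hS) (.inl (notMem_mul_of_norm_le hlast₁ hS)) _ _
    · exact measure_inter_inter_eq_inv_four_mul hμ hP hPs h0 h1 h01
        (mul_of_notMem_mul_of_norm_le hext₁ hS) (.inl (notMem_mul_of_norm_le hlast₀ hS)) _ _
    · simpa using hlast₀.symm.trans hlast₁

end Bowen

/-- the Ornstein–Weiss map `φ : K₂^G → K₄^G`, where `G` is the rank 2 free
group, `K₂ = ℤ/2` with uniform measure and `K₄ = ℤ/2 × ℤ/2` with uniform measure, is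
measurable, `G`-equivariant, and pushes the product measure `κ₂^G` forward to `κ₄^G`.
Hence the Bernoulli shift of entropy `log 2` factors onto that of entropy `log 4`.
(The product measures are characterized by their values on cylinder sets.) -/
theorem ornstein_weiss_factor
    (μ₂ : Measure (FreeGroup (Fin 2) → ZMod 2))
    (μ₄ : Measure (FreeGroup (Fin 2) → ZMod 2 × ZMod 2))
    (h₂ : ∀ (F : Finset (FreeGroup (Fin 2))) (y : FreeGroup (Fin 2) → ZMod 2),
      μ₂ {x | ∀ g ∈ F, x g = y g} = (2 : ℝ≥0∞)⁻¹ ^ F.card)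
    (h₄ : ∀ (F : Finset (FreeGroup (Fin 2))) (y : FreeGroup (Fin 2) → ZMod 2 × ZMod 2),
      μ₄ {x | ∀ g ∈ F, x g = y g} = (4 : ℝ≥0∞)⁻¹ ^ F.card) :
    Measurable owMap ∧ (∀ (g : FreeGroup (Fin 2)) (x : FreeGroup (Fin 2) → ZMod 2),
      owMap (shift g x) = shift g (owMap x)) ∧ Measure.map owMap μ₂ = μ₄ := by
  have : IsProbabilityMeasure μ₂ := ⟨by simpa using h₂ ∅ 0⟩
  have hμ₂ : ∀ z, MeasurePreserving (· + z) μ₂ μ₂ :=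
    measurePreserving_add_right_of_pointCylinder fun F y y' => (h₂ F y).trans (h₂ F y').symm
  refine ⟨measurable_owMap, owMap_shift, Measure.ext_of_pointCylinder fun F y => ?_⟩
  rw [Measure.map_apply measurable_owMap (measurableSet_pointCylinder F y),
    measure_owMap_preimage_pointCylinder hμ₂]
  exact (h₄ F y).symm
end

section
/- The Ornstein–Weiss map φ : (ℤ/2ℤ)^G → (ℤ/2ℤ × ℤ/2ℤ)^G, φ(x)(g) = (x(g)+x(ga), x(g)+x(gb)), where G = ⟨a,b⟩ is free of rank 2, is surjective (every element of the codomain has a preimage). -/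
namespace FreeGroup

variable {α A : Type*}

/-- Valued in the opposite group so that it is a right action, matching right multiplication by
the generators. -/
def shearAction (σ : α → FreeGroup α → Equiv.Perm A) :
    FreeGroup α →* (Equiv.Perm (FreeGroup α × A))ᵐᵒᵖ :=
  lift fun i => .op ((Equiv.mulRight (of i)).prodShear (σ i))

variable (σ : α → FreeGroup α → Equiv.Perm A)

lemma shearAction_mul_of (g : FreeGroup α) (i : α) (p : FreeGroup α × A) :
    (shearAction σ (g * of i)).unop p =
      (Equiv.mulRight (of i)).prodShear (σ i) ((shearAction σ g).unop p) := by
  simp [shearAction]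

lemma shearAction_fst (g : FreeGroup α) (p : FreeGroup α × A) :
    ((shearAction σ g).unop p).1 = p.1 * g := by
  induction g generalizing p with
  | C1 => simp
  | of i => simpa using congrArg Prod.fst (shearAction_mul_of σ 1 i p)
  | inv_of i ih =>
    set q := (shearAction σ (of i)⁻¹).unop p
    have hq : (shearAction σ (of i)).unop q = p := by
      rw [← Equiv.Perm.mul_apply, ← MulOpposite.unop_mul, ← (shearAction σ).map_mul,
        inv_mul_cancel, (shearAction σ).map_one]
      rfl
    have h := ih q
    rw [hq] at h
    exact eq_mul_inv_of_mul_eq h.symm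
  | mul g h ihg ihh => simp [Equiv.Perm.mul_apply, ihg, ihh, mul_assoc]

theorem exists_apply_one_and_apply_mul_of (a : A) :
    ∃ x : FreeGroup α → A, x 1 = a ∧ ∀ g i, x (g * of i) = σ i g (x g) := by
  refine ⟨fun g => ((shearAction σ g).unop (1, a)).2, by simp, fun g i => ?_⟩
  simp only [shearAction_mul_of, Equiv.prodShear_apply, shearAction_fst, one_mul]

end FreeGroup

/-- the Ornstein–Weiss map `φ : (ℤ/2)^G → (ℤ/2 × ℤ/2)^G`, `G` the rank 2
free group, is surjective: every element of the codomain has a preimage. -/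
theorem ornstein_weiss_surjective : Function.Surjective Bowen.owMap := by
  intro y
  obtain ⟨x, -, hx⟩ := FreeGroup.exists_apply_one_and_apply_mul_of
    (fun i g => Equiv.addRight (![(y g).1, (y g).2] i)) (0 : ZMod 2)
  refine ⟨x, funext fun g => Prod.ext ?_ ?_⟩
  · simpa [Bowen.owMap, hx] using CharTwo.add_cancel_left (x g) ((y g).1)
  · simpa [Bowen.owMap, hx] using CharTwo.add_cancel_left (x g) ((y g).2)
end

section
/- Let G act on (X,μ), let α = {A₁,...,A_n} be a finite partition and β a finite generating partition. For every ε > 0 there is a finite M ⊆ G such that for all finite L ⊇ M, the atoms of β^L can be ordered B₁,...,B_{m_L} so that for some r and some f : {1,...,r} → {1,...,n}: μ(B_i ∩ A_{f(i)})/μ(B_i) ≥ 1-ε for i ≤ r, and μ(⋃_{i>r} B_i) < ε. -/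
open MeasureTheory Real
open scoped symmDiff ENNReal

namespace Bowen

variable {X : Type*} [MeasurableSpace X]

/-- Shannon entropy of the (countable) partition of `X` into fibers of `α`. -/
noncomputable def entropy {ι : Type*} (μ : Measure X) (α : X → ι) : ℝ :=
  ∑' i, Real.negMulLog (μ (α ⁻¹' {i})).toReal

/-- Conditional entropy `H(α|β)` of the fiber partition of `α` given that of `β`. -/
noncomputable def condEntropy {ι κ : Type*} (μ : Measure X) (α : X → ι) (β : X → κ) : ℝ :=
  ∑' p : ι × κ,
    -((μ (α ⁻¹' {p.1} ∩ β ⁻¹' {p.2})).toReal *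
      Real.log ((μ (α ⁻¹' {p.1} ∩ β ⁻¹' {p.2})).toReal / (μ (β ⁻¹' {p.2})).toReal))

/-- The Rokhlin distance `d(α,β) = H(α|β) + H(β|α)`. -/
noncomputable def rokhlin {ι κ : Type*} (μ : Measure X) (α : X → ι) (β : X → κ) : ℝ :=
  condEntropy μ α β + condEntropy μ β α

/-- A finite measurable partition, presented as a measurable map to `ℕ` with finite range. -/
def IsFinPart (α : X → ℕ) : Prop := Measurable α ∧ (Set.range α).Finite

/-- `α` refines `β` (mod null sets): `β` factors a.e. through `α`. -/
def RefinesI {ι κ : Type*} (μ : Measure X) (α : X → ι) (β : X → κ) : Prop :=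
  ∃ h : ι → κ, ∀ᵐ x ∂μ, β x = h (α x)

/-- The join `α ∨ β` of two `ℕ`-indexed partitions, encoded via `Nat.pair`. -/
def joinN (α β : X → ℕ) : X → ℕ := fun x => Nat.pair (α x) (β x)

/-- The translated partition `gα`, with atoms `gA = {x | g⁻¹x ∈ A}` for atoms `A` of `α`. -/
def smulPart {G : Type*} [Group G] [MulAction G X] {ι : Type*} (g : G) (α : X → ι) : X → ι :=
  fun x => α (g⁻¹ • x)

/-- Join of a list of `ℕ`-indexed partitions. -/
def joinList (l : List (X → ℕ)) : X → ℕ :=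
  l.foldr (fun a r x => Nat.pair (a x) (r x)) (fun _ => 0)

/-- The join `α^F = ⋁_{g ∈ F} gα` over a finite set of group elements. -/
noncomputable def joinOver {G : Type*} [Group G] [MulAction G X] (F : Finset G) (α : X → ℕ) : X → ℕ :=
  joinList (F.toList.map (fun g => smulPart g α))

/-- The smallest `G`-invariant σ-algebra containing the partition `α`. -/
def genSA (G : Type*) [Group G] [MulAction G X] {ι : Type*} (α : X → ι) :
    MeasurableSpace X :=
  MeasurableSpace.generateFrom {s | ∃ (g : G) (i : ι), s = {x | α (g⁻¹ • x) = i}}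

/-- `α` is a generating partition: every measurable set agrees mod `μ`-null sets with a set
in the smallest `G`-invariant σ-algebra containing `α`. -/
def IsGenerating (G : Type*) [Group G] [MulAction G X] {ι : Type*} (μ : Measure X)
    (α : X → ι) : Prop :=
  ∀ s : Set X, MeasurableSet s → ∃ t : Set X, MeasurableSet[genSA G α] t ∧ μ (s ∆ t) = 0

/-- Combinatorial equivalence: `α ≤ β^L` and `β ≤ α^M` for some finite `L, M ⊆ G`. -/
def CombEquiv (G : Type*) [Group G] [MulAction G X] (μ : Measure X) (α β : X → ℕ) : Prop :=
  ∃ L M : Finset G, RefinesI μ (joinOver L β) α ∧ RefinesI μ (joinOver M α) β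

/-- `α` and `β` induce the same partition mod null sets. -/
def SamePart (μ : Measure X) (α β : X → ℕ) : Prop := RefinesI μ α β ∧ RefinesI μ β α

/-- `σ` is a simple splitting of `α`: `σ = α ∨ sβ` (as partitions, mod null sets) for some
`s ∈ S` and some coarsening `β` of `α`. -/
def SimpleSplit {G : Type*} [Group G] [MulAction G X] (μ : Measure X) (S : Finset G)
    (σ α : X → ℕ) : Prop :=
  ∃ s ∈ S, ∃ β : X → ℕ, RefinesI μ α β ∧ SamePart μ σ (joinN α (smulPart s β))

/-- `σ` is a splitting of `α`: obtained from `α` by finitely many simple splittings. -/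
def IsSplitting {G : Type*} [Group G] [MulAction G X] (μ : Measure X) (S : Finset G)
    (σ α : X → ℕ) : Prop :=
  Relation.ReflTransGen (fun a b => SimpleSplit μ S b a) α σ

/-- The ball of radius `n` about the identity for the word metric of `S`:
all products of at most `n` elements of `S`. -/
def ballF {G : Type*} [Group G] [DecidableEq G] (S : Finset G) : ℕ → Finset G
  | 0 => {1}
  | n + 1 => ballF S n ∪ (S ×ˢ ballF S n).image (fun p => p.1 * p.2)

/-- The Cayley graph of `(G,S)` (as a simple graph). -/
def cayley {G : Type*} [Group G] (S : Finset G) : SimpleGraph G :=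
  SimpleGraph.fromRel (fun g h => g⁻¹ * h ∈ S)

/-- The symmetric generating set `S = {s₁^{±1},...,s_r^{±1}}` of the rank `r` free group. -/
noncomputable def genS (r : ℕ) : Finset (FreeGroup (Fin r)) :=
  letI := Classical.decEq (FreeGroup (Fin r))
  (Finset.univ.image fun i : Fin r => FreeGroup.of i) ∪
    (Finset.univ.image fun i : Fin r => (FreeGroup.of i)⁻¹)

/-- The word-metric ball of radius `n` about `e` in the rank `r` free group. -/
noncomputable def ballFree (r : ℕ) (n : ℕ) : Finset (FreeGroup (Fin r)) :=
  letI := Classical.decEq (FreeGroup (Fin r))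
  ballF (genS r) n

/-- Bowen's functional `F(α) = (1-2r)H(α) + ∑ᵢ H(α ∨ sᵢα)`. -/
noncomputable def Ffun (r : ℕ) {X : Type*} [MeasurableSpace X]
    [MulAction (FreeGroup (Fin r)) X] (μ : Measure X) (α : X → ℕ) : ℝ :=
  (1 - 2 * (r : ℝ)) * entropy μ α +
    ∑ i : Fin r, entropy μ (joinN α (smulPart (FreeGroup.of i) α))

/-- Conditional entropy of the partition `α` relative to a sub-σ-algebra `m`:
`H(α|m) = ∫ -log μ(A_x|m)(x) dμ(x)`. -/
noncomputable def condEntropySigma (μ : Measure X) (α : X → ℕ) (m : MeasurableSpace X) : ℝ :=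
  ∫ x, -Real.log ((μ[Set.indicator (α ⁻¹' {α x}) (fun _ => (1 : ℝ))|m]) x) ∂μ

end Bowen

/-!
Since `β` generates, every atom `α⁻¹{a}` is approximated in measure by a union of atoms of `β^L`
as soon as `L` is large, and these approximations assemble into a map `k` from atoms of `β^L` to
atoms of `α` with `μ {α ≠ k ∘ β^L} < ε²`. An atom `B` of `β^L` that is not `(1 - ε)`-contained in
`α⁻¹{k B}` contributes at least `ε μ B` to that set, so such atoms have total measure `< ε`.
-/

open Bowen MeasureTheory Function Set
open scoped symmDiff ENNReal

theorem Function.FactorsThrough.preimage_image_preimage {X β γ : Type*} {g : X → γ} {f : X → β}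
    (hf : FactorsThrough g f) (S : Set γ) : f ⁻¹' (f '' (g ⁻¹' S)) = g ⁻¹' S := by
  ext x
  exact ⟨fun ⟨y, hy, hyx⟩ => show g x ∈ S from hf hyx ▸ hy, fun hx => ⟨x, hx, rfl⟩⟩

theorem exists_setOf_ne_comp_subset_biUnion_symmDiff {X ι κ : Type*} [Nonempty X] (α : X → κ)
    (J : X → ι) (T : κ → Set ι) :
    ∃ k : ι → κ, (∀ i, k i ∈ range α) ∧
      {x | α x ≠ k (J x)} ⊆ ⋃ a ∈ range α, (α ⁻¹' {a}) ∆ (J ⁻¹' T a) := by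
  classical
  refine ⟨fun i => if h : ∃ a ∈ range α, i ∈ T a then h.choose else α (Classical.arbitrary X),
    fun i => ?_, fun x hx => ?_⟩
  · dsimp only
    split_ifs with h
    exacts [h.choose_spec.1, mem_range_self _]
  · by_cases hxT : J x ∈ T (α x)
    · have h : ∃ a ∈ range α, J x ∈ T a := ⟨α x, mem_range_self x, hxT⟩
      simp only [mem_ofPred_eq, dif_pos h] at hx
      exact mem_biUnion h.choose_spec.1 (mem_symmDiff.mpr (Or.inr ⟨h.choose_spec.2, hx⟩))
    · exact mem_biUnion (mem_range_self x) (mem_symmDiff.mpr (Or.inl ⟨rfl, hxT⟩))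

namespace Bowen

variable {X : Type*}

theorem joinList_eq_joinList_iff {l : List (X → ℕ)} {x y : X} :
    joinList l x = joinList l y ↔ ∀ f ∈ l, f x = f y := by
  induction l with
  | nil => simp [joinList]
  | cons a l ih =>
    simp only [joinList, List.foldr_cons, List.mem_cons, forall_eq_or_imp] at ih ⊢
    rw [Nat.pair_eq_pair, ih]

section Cylinders

variable {G : Type*} [Group G] [MulAction G X]

theorem joinOver_eq_joinOver_iff {L : Finset G} {β : X → ℕ} {x y : X} :
    joinOver L β x = joinOver L β y ↔ ∀ g ∈ L, β (g⁻¹ • x) = β (g⁻¹ • y) := by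
  simp [joinOver, joinList_eq_joinList_iff, smulPart]

theorem factorsThrough_joinOver {L L' : Finset G} (h : L ⊆ L') (β : X → ℕ) :
    FactorsThrough (joinOver L β) (joinOver L' β) := fun _ _ hxy =>
  joinOver_eq_joinOver_iff.mpr fun g hg => joinOver_eq_joinOver_iff.mp hxy g (h hg)

theorem factorsThrough_smulPart_joinOver {L : Finset G} {g : G} (hg : g ∈ L) (β : X → ℕ) :
    FactorsThrough (smulPart g β) (joinOver L β) := fun _ _ hxy =>
  joinOver_eq_joinOver_iff.mp hxy g hg

theorem exists_preimage_joinOver_eq_of_subset {L L' : Finset G} (h : L ⊆ L') (β : X → ℕ)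
    (S : Set ℕ) : ∃ T : Set ℕ, joinOver L β ⁻¹' S = joinOver L' β ⁻¹' T :=
  ⟨_, ((factorsThrough_joinOver h β).preimage_image_preimage S).symm⟩

variable (G) in
def cylinders (β : X → ℕ) : Set (Set X) :=
  {C | ∃ (L : Finset G) (S : Set ℕ), C = joinOver L β ⁻¹' S}

theorem isSetRing_cylinders (β : X → ℕ) : IsSetRing (cylinders G β) := by
  classical
  have common : ∀ {C₁ C₂ : Set X}, C₁ ∈ cylinders G β → C₂ ∈ cylinders G β →
      ∃ (L : Finset G) (T₁ T₂ : Set ℕ), C₁ = joinOver L β ⁻¹' T₁ ∧ C₂ = joinOver L β ⁻¹' T₂ := by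
    rintro _ _ ⟨L₁, S₁, rfl⟩ ⟨L₂, S₂, rfl⟩
    obtain ⟨T₁, hT₁⟩ :=
      exists_preimage_joinOver_eq_of_subset (Finset.subset_union_left (s₂ := L₂)) β S₁
    obtain ⟨T₂, hT₂⟩ :=
      exists_preimage_joinOver_eq_of_subset (Finset.subset_union_right (s₁ := L₁)) β S₂
    exact ⟨L₁ ∪ L₂, T₁, T₂, hT₁, hT₂⟩
  refine ⟨⟨∅, ∅, rfl⟩, fun C₁ C₂ h₁ h₂ => ?_, fun C₁ C₂ h₁ h₂ => ?_⟩
  · obtain ⟨L, T₁, T₂, rfl, rfl⟩ := common h₁ h₂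
    exact ⟨L, T₁ ∪ T₂, rfl⟩
  · obtain ⟨L, T₁, T₂, rfl, rfl⟩ := common h₁ h₂
    exact ⟨L, T₁ \ T₂, rfl⟩

theorem genSA_le_generateFrom_cylinders (β : X → ℕ) :
    genSA G β ≤ MeasurableSpace.generateFrom (cylinders G β) := by
  refine MeasurableSpace.generateFrom_le fun _ ⟨g, i, hs⟩ => ?_
  refine MeasurableSpace.measurableSet_generateFrom
    ⟨{g}, joinOver {g} β '' (smulPart g β ⁻¹' {i}), hs.trans ?_⟩
  exact ((factorsThrough_smulPart_joinOver (Finset.mem_singleton_self g) β).preimage_image_preimage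
    {i}).symm

end Cylinders

variable [MeasurableSpace X]

theorem measurable_joinList {l : List (X → ℕ)} (hl : ∀ f ∈ l, Measurable f) :
    Measurable (joinList l) := by
  induction l with
  | nil => exact measurable_const
  | cons a l ih =>
    simp only [List.mem_cons, forall_eq_or_imp] at hl
    exact (measurable_of_countable fun p : ℕ × ℕ => Nat.pair p.1 p.2).comp
      (hl.1.prodMk (ih hl.2))

section Approximation

variable {G : Type*} [Group G] [MulAction G X] (μ : Measure X)
  (hmeas : ∀ g : G, Measurable (fun x : X => g • x)) {β : X → ℕ} (hβ : Measurable β)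
include hmeas hβ

theorem measurable_joinOver (L : Finset G) : Measurable (joinOver L β) := by
  refine measurable_joinList fun f hf => ?_
  obtain ⟨g, -, rfl⟩ := List.mem_map.mp hf
  exact hβ.comp (hmeas g⁻¹)

variable [IsFiniteMeasure μ] (hgen : IsGenerating G μ β)
include hgen

theorem exists_preimage_joinOver_symmDiff_lt {s : Set X} (hs : MeasurableSet s) {δ : ℝ≥0∞}
    (hδ : 0 < δ) : ∃ (L : Finset G) (S : Set ℕ), μ ((joinOver L β ⁻¹' S) ∆ s) < δ := by
  obtain ⟨t, ht, hst⟩ := hgen s hs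
  have ht' := genSA_le_generateFrom_cylinders β t ht
  have hle : MeasurableSpace.generateFrom (cylinders G β) ≤ ‹MeasurableSpace X› :=
    MeasurableSpace.generateFrom_le fun _ ⟨L, S, hC⟩ =>
      hC ▸ measurable_joinOver hmeas hβ L MeasurableSet.of_discrete
  obtain ⟨_, ⟨L, S, rfl⟩, hc⟩ := @exists_measure_symmDiff_lt_of_generateFrom_isSetRing X
    (MeasurableSpace.generateFrom (cylinders G β)) (μ.trim hle) _ _ (isSetRing_cylinders β)
    ⟨{univ}, countable_singleton _, singleton_subset_iff.mpr ⟨∅, univ, rfl⟩, by simp⟩ rfl t ht'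
    δ hδ
  rw [trim_measurableSet_eq hle
    ((MeasurableSpace.measurableSet_generateFrom (s := cylinders G β) ⟨L, S, rfl⟩).symmDiff
      ht')] at hc
  refine ⟨L, S, ?_⟩
  calc μ ((joinOver L β ⁻¹' S) ∆ s) ≤ μ ((joinOver L β ⁻¹' S) ∆ t) + μ (t ∆ s) :=
        measure_symmDiff_le _ _ _
    _ < δ := by rwa [symmDiff_comm t, hst, add_zero]

theorem exists_forall_superset_exists_measure_ne_comp_joinOver_lt [Nonempty X] {α : X → ℕ}
    (hα : IsFinPart α) {δ : ℝ≥0∞} (hδ : 0 < δ) :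
    ∃ M : Finset G, ∀ L : Finset G, M ⊆ L → ∃ k : ℕ → ℕ, (∀ i, k i ∈ range α) ∧
      μ {x | α x ≠ k (joinOver L β x)} < δ := by
  classical
  obtain ⟨δ', hδ'_pos, hδ'_sum⟩ := ENNReal.exists_pos_sum_of_countable' hδ.ne' ℕ
  choose Lα Sα hLS using fun a : ℕ =>
    exists_preimage_joinOver_symmDiff_lt μ hmeas hβ hgen (hα.1 (measurableSet_singleton a))
      (hδ'_pos a)
  set R := hα.2.toFinset
  refine ⟨R.sup Lα, fun L hML => ?_⟩
  choose! T hT using fun a (ha : a ∈ R) =>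
    exists_preimage_joinOver_eq_of_subset ((Finset.le_sup ha).trans hML) β (Sα a)
  obtain ⟨k, hk_range, hk_sub⟩ :=
    exists_setOf_ne_comp_subset_biUnion_symmDiff α (joinOver L β) T
  refine ⟨k, hk_range, ?_⟩
  calc μ {x | α x ≠ k (joinOver L β x)}
      ≤ μ (⋃ a ∈ R, (α ⁻¹' {a}) ∆ (joinOver L β ⁻¹' T a)) := by
        refine measure_mono fun x hx => ?_
        obtain ⟨a, ha, hxa⟩ := mem_iUnion₂.mp (hk_sub hx)
        exact mem_iUnion₂.mpr ⟨a, hα.2.mem_toFinset.mpr ha, hxa⟩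
    _ ≤ ∑ a ∈ R, μ ((α ⁻¹' {a}) ∆ (joinOver L β ⁻¹' T a)) := measure_biUnion_finset_le _ _
    _ ≤ ∑ a ∈ R, δ' a := Finset.sum_le_sum fun a ha => by
        rw [← hT a ha, symmDiff_comm]
        exact (hLS a).le
    _ ≤ ∑' a, δ' a := ENNReal.sum_le_tsum R
    _ < δ := hδ'_sum

end Approximation

def goodAtoms {ι κ : Type*} (μ : Measure X) (J : X → ι) (α : X → κ) (k : ι → κ) (e : ℝ≥0∞) :
    Set ι :=
  {i | (1 - e) * μ (J ⁻¹' {i}) ≤ μ (J ⁻¹' {i} ∩ α ⁻¹' {k i})}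

theorem mul_measure_le_measure_diff_of_lt {μ : Measure X} {A B : Set X} (hA : MeasurableSet A)
    {e : ℝ≥0∞} (h : μ (B ∩ A) < (1 - e) * μ B) : e * μ B ≤ μ (B \ A) := by
  by_contra! hlt
  have he : e ≤ 1 := by
    by_contra! he
    simp [tsub_eq_zero_of_le he.le] at h
  have := ENNReal.add_lt_add h hlt
  rw [measure_inter_add_sdiff B hA, ← add_mul, tsub_add_cancel_of_le he, one_mul] at this
  exact lt_irrefl _ this

theorem mul_measure_setOf_not_mem_goodAtoms_le {ι κ : Type*} [Countable ι] {μ : Measure X}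
    {J : X → ι} (hJ : ∀ i, MeasurableSet (J ⁻¹' {i})) {α : X → κ}
    (hα : ∀ a, MeasurableSet (α ⁻¹' {a})) (k : ι → κ) (e : ℝ≥0∞) :
    e * μ {x | J x ∉ goodAtoms μ J α k e} ≤ μ {x | α x ≠ k (J x)} := by
  set D := {x | α x ≠ k (J x)}
  set Bad := (goodAtoms μ J α k e)ᶜ
  have hfiber : ∀ i, J ⁻¹' {i} \ α ⁻¹' {k i} = J ⁻¹' {i} ∩ D := by
    intro i
    ext x
    constructor <;> rintro ⟨hx, hne⟩ <;> refine ⟨hx, ?_⟩ <;> simp_all [D]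
  calc e * μ {x | J x ∉ goodAtoms μ J α k e}
      = ∑' i : Bad, e * μ (J ⁻¹' {(i : ι)}) := by
        rw [ENNReal.tsum_mul_left, tsum_measure_preimage_singleton (to_countable _) fun i _ => hJ i]
        rfl
    _ ≤ ∑' i : Bad, μ.restrict D (J ⁻¹' {(i : ι)}) := ENNReal.tsum_le_tsum fun i => by
        rw [Measure.restrict_apply (hJ i), ← hfiber]
        exact mul_measure_le_measure_diff_of_lt (hα _) (not_le.mp i.2)
    _ = μ.restrict D (J ⁻¹' Bad) := tsum_measure_preimage_singleton (to_countable _) fun i _ => hJ i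
    _ ≤ μ D := by
        rw [← Measure.restrict_apply_univ D]
        exact measure_mono (subset_univ _)

end Bowen

theorem atoms_almost_contained_general {X : Type*} [MeasurableSpace X] {G : Type*} [Group G]
    [MulAction G X] (μ : Measure X) [IsProbabilityMeasure μ]
    (hmp : ∀ g : G, MeasurePreserving (fun x : X => g • x) μ μ)
    (α : X → ℕ) (hα : IsFinPart α)
    (β : X → ℕ) (hβ : IsFinPart β) (hgen : IsGenerating G μ β)
    (ε : ℝ) (hε : 0 < ε) :
    ∃ M : Finset G, ∀ L : Finset G, M ⊆ L →
      ∃ (Good : Set ℕ) (f : ℕ → ℕ),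
        (∀ i ∈ Good, f i ∈ Set.range α ∧
          (1 - ENNReal.ofReal ε) * μ ((joinOver L β) ⁻¹' {i}) ≤
            μ ((joinOver L β) ⁻¹' {i} ∩ α ⁻¹' {f i})) ∧
        μ {x | joinOver L β x ∉ Good} < ENNReal.ofReal ε := by
  have := nonempty_of_isProbabilityMeasure μ
  have hmeas : ∀ g : G, Measurable (fun x : X => g • x) := fun g => (hmp g).measurable
  have he : 0 < ENNReal.ofReal ε := ENNReal.ofReal_pos.mpr hε
  obtain ⟨M, hM⟩ := exists_forall_superset_exists_measure_ne_comp_joinOver_lt μ hmeas hβ.1 hgen hα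
    (ENNReal.mul_pos he.ne' he.ne')
  refine ⟨M, fun L hML => ?_⟩
  obtain ⟨k, hk_range, hk⟩ := hM L hML
  refine ⟨goodAtoms μ (joinOver L β) α k (ENNReal.ofReal ε), k, fun i hi => ⟨hk_range i, hi⟩, ?_⟩
  have hbad := mul_measure_setOf_not_mem_goodAtoms_le (μ := μ)
    (fun i => measurable_joinOver hmeas hβ.1 L (measurableSet_singleton i))
    (fun a => hα.1 (measurableSet_singleton a)) k (ENNReal.ofReal ε)
  exact (ENNReal.mul_lt_mul_iff_right he.ne' ENNReal.ofReal_ne_top).mp (hbad.trans_lt hk)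

/-- Lemma 3.2: if `β` is generating, then for every `ε > 0` there is a
finite `M ⊆ G` such that for every finite `L ⊇ M` the atoms of `β^L` split into a "good"
collection, each of whose members is `(1-ε)`-proportionally contained in a single atom of
`α`, and a remainder of total measure `< ε`. -/
theorem atoms_almost_contained {X : Type*} [MeasurableSpace X] {G : Type*} [Group G]
    [Countable G] [MulAction G X] (μ : Measure X) [IsProbabilityMeasure μ]
    (hmp : ∀ g : G, MeasurePreserving (fun x : X => g • x) μ μ)
    (α : X → ℕ) (hα : IsFinPart α)
    (β : X → ℕ) (hβ : IsFinPart β) (hgen : IsGenerating G μ β)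
    (ε : ℝ) (hε : 0 < ε) :
    ∃ M : Finset G, ∀ L : Finset G, M ⊆ L →
      ∃ (Good : Set ℕ) (f : ℕ → ℕ),
        (∀ i ∈ Good, f i ∈ Set.range α ∧
          (1 - ENNReal.ofReal ε) * μ ((joinOver L β) ⁻¹' {i}) ≤
            μ ((joinOver L β) ⁻¹' {i} ∩ α ⁻¹' {f i})) ∧
        μ {x | joinOver L β x ∉ Good} < ENNReal.ofReal ε :=
  atoms_almost_contained_general μ hmp α hα β hβ hgen ε hε
end
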